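/- arXiv:0812.2306 — 2 statements merged into one kernel-verified Lean document; each statement's English description precedes it below -/
import Mathlib

section
/- Let σ be the unique field automorphism of ℚ(q, z_1,…,z_l, w_1,…,w_l) fixing ℚ with σ(q) = q^{−1}, σ(z_i) = z_i^{−1} and σ(w_i) = w_i^{−1} for all i. Then for every m ∈ ℕ^l, σ(X_m(z,w)) = q^{∑_i d_i m_i} · X_m(w,z). -/
/- STATEMENT 12: Let σ be the field automorphism of ℚ(q,z,w) with σ(q)=q⁻¹,
   σ(z_i)=z_i⁻¹, σ(w_i)=w_i⁻¹ (a ring automorphism automatically fixes ℚ).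
   Then σ(X_m(z,w)) = q^{∑ d_i m_i} X_m(w,z), where
   X_m(z,w) = ∑_{0≤a≤m} J_{m−a}(z) J_a(w) q^{W(a)} w^a for the unique family
   (J_m) solving the fermionic recursion (symmetrized Cartan matrix B). -/

noncomputable section

open scoped BigOperators

/-- The field ℚ(q, z_1, …, z_l, w_1, …, w_l). -/
abbrev F12 (l : ℕ) : Type :=
  FractionRing (MvPolynomial (Option (Fin l ⊕ Fin l)) ℚ)

/-- the variable q -/
def q12 (l : ℕ) : F12 l :=
  algebraMap (MvPolynomial (Option (Fin l ⊕ Fin l)) ℚ) (F12 l) (MvPolynomial.X none)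

/-- the variables z_i -/
def z12 (l : ℕ) (i : Fin l) : F12 l :=
  algebraMap (MvPolynomial (Option (Fin l ⊕ Fin l)) ℚ) (F12 l)
    (MvPolynomial.X (some (Sum.inl i)))

/-- the variables w_i -/
def w12 (l : ℕ) (i : Fin l) : F12 l :=
  algebraMap (MvPolynomial (Option (Fin l ⊕ Fin l)) ℚ) (F12 l)
    (MvPolynomial.X (some (Sum.inr i)))

/-- `W(a) = (1/2)∑ B_{ij} a_i a_j − ∑ d_i a_i`  (the double sum is even, so
integer division by 2 gives the exact value). -/
def W12 {l : ℕ} (B : Matrix (Fin l) (Fin l) ℤ) (d : Fin l → ℕ) (a : Fin l → ℕ) : ℤ :=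
  (∑ i, ∑ j, B i j * a i * a j) / 2 - ∑ i, (d i : ℤ) * a i

/-- `(Q;Q)_n = ∏_{k=1}^n (1 − Q^k)` -/
def pochQ {F : Type} [Field F] (Q : F) (n : ℕ) : F :=
  ∏ k ∈ Finset.range n, (1 - Q ^ (k + 1))

/-- `J` is the family satisfying `J 0 = 1` and the fermionic recursion with
variables `q`, `z`. -/
def IsFerm {l : ℕ} (B : Matrix (Fin l) (Fin l) ℤ) (d : Fin l → ℕ)
    {F : Type} [Field F] (q : F) (z : Fin l → F) (J : (Fin l → ℕ) → F) : Prop :=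
  J 0 = 1 ∧ ∀ m : Fin l → ℕ, J m = ∑ a ∈ Finset.Iic m,
    (∏ i, z i ^ a i) * q ^ (W12 B d a) *
      (∏ i, pochQ (q ^ d i) (m i - a i))⁻¹ * J a

/-!
The automorphism `σ` acts on a fermionic family by a monomial,
`σ (J_m(z)) = z^m q^(W(m) + ∑ dᵢmᵢ) J_m(z)`, and the theorem follows from this termwise after the
substitution `a ↦ m - a`.

Applying `σ` to the recursion turns `1/(Q;Q)_n` into `Q^n (-1)^n Q^(n choose 2)/(Q;Q)_n`, and the
kernel `(-1)^n Q^(n choose 2)/(Q;Q)_n` (`pochQDual`) is the convolution inverse of `1/(Q;Q)_n`: the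
product of the two generating series is invariant under `x ↦ Qx`, hence constant. Inverting the
recursion with this kernel shows that `z^m q^(W(m) + ∑ dᵢmᵢ) J_m` solves the `σ`-image of the
recursion. That triangular system has only one solution with value `1` at `m = 0`, because its
diagonal coefficients `(z^m q^W(m))⁻¹` differ from `1` for `m ≠ 0`.
-/

namespace FermionicDuality

open Finset

variable {F : Type} [Field F]

lemma pochQ_zero (Q : F) : pochQ Q 0 = 1 := by simp [pochQ]

lemma pochQ_succ (Q : F) (n : ℕ) : pochQ Q (n + 1) = pochQ Q n * (1 - Q ^ (n + 1)) :=
  prod_range_succ _ n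

lemma one_sub_pow_ne_zero {Q : F} (hQ : ¬IsOfFinOrder Q) {n : ℕ} (hn : n ≠ 0) :
    1 - Q ^ n ≠ 0 :=
  sub_ne_zero.2 fun h => hQ (isOfFinOrder_iff_pow_eq_one.2 ⟨n, Nat.pos_of_ne_zero hn, h.symm⟩)

lemma pochQ_inv_base {Q : F} (hQ : Q ≠ 0) (n : ℕ) :
    pochQ Q⁻¹ n = (-1) ^ n * (Q ^ (n + 1).choose 2)⁻¹ * pochQ Q n := by
  induction n with
  | zero => simp [pochQ_zero]
  | succ n ih =>
    rw [pochQ_succ, pochQ_succ, ih, Nat.choose_succ_succ' (n + 1), Nat.choose_one_right,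
      pow_add, inv_pow]
    field_simp
    ring

def pochQDual (Q : F) (n : ℕ) : F := (-1) ^ n * Q ^ n.choose 2 * (pochQ Q n)⁻¹

lemma inv_pochQ_inv_base {Q : F} (hQ : Q ≠ 0) (n : ℕ) :
    (pochQ Q⁻¹ n)⁻¹ = Q ^ n * pochQDual Q n := by
  rw [pochQ_inv_base hQ, pochQDual, Nat.choose_succ_succ', Nat.choose_one_right]
  simp only [mul_inv, inv_inv, pow_add]
  rw [← inv_pow, inv_neg_one]
  ring

lemma inv_pochQ_succ_mul {Q : F} (hQ : ¬IsOfFinOrder Q) (n : ℕ) :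
    (pochQ Q (n + 1))⁻¹ * (1 - Q ^ (n + 1)) = (pochQ Q n)⁻¹ := by
  rw [pochQ_succ, mul_inv, inv_mul_cancel_right₀ (one_sub_pow_ne_zero hQ n.succ_ne_zero)]

lemma pochQDual_succ_mul {Q : F} (hQ : ¬IsOfFinOrder Q) (n : ℕ) :
    pochQDual Q (n + 1) * (1 - Q ^ (n + 1)) = -Q ^ n * pochQDual Q n := by
  rw [pochQDual, mul_assoc, inv_pochQ_succ_mul hQ, Nat.choose_succ_succ', Nat.choose_one_right,
    pochQDual]
  ring

theorem sum_antidiagonal_pochQDual_mul_inv_pochQ {Q : F} (hQ : ¬IsOfFinOrder Q) (n : ℕ) :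
    ∑ p ∈ antidiagonal n, pochQDual Q p.1 * (pochQ Q p.2)⁻¹ = if n = 0 then 1 else 0 := by
  set P : ℕ → F := fun n => ∑ p ∈ antidiagonal n, pochQDual Q p.1 * (pochQ Q p.2)⁻¹ with hP
  have step (n : ℕ) : (1 - Q ^ (n + 1)) * P (n + 1) = (1 - Q ^ n) * P n := by
    have hsplit (p : ℕ × ℕ) : 1 - Q ^ (p.1 + p.2) = (1 - Q ^ p.2) + Q ^ p.2 * (1 - Q ^ p.1) := by
      ring
    calc (1 - Q ^ (n + 1)) * P (n + 1)
      _ = ∑ p ∈ antidiagonal (n + 1), pochQDual Q p.1 * ((pochQ Q p.2)⁻¹ * (1 - Q ^ p.2))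
          + ∑ p ∈ antidiagonal (n + 1), pochQDual Q p.1 * (1 - Q ^ p.1) * (pochQ Q p.2)⁻¹
            * Q ^ p.2 := by
        rw [hP, mul_sum, ← sum_add_distrib]
        refine sum_congr rfl fun p hp => ?_
        rw [← mem_antidiagonal.1 hp, hsplit]
        ring
      _ = P n + ∑ p ∈ antidiagonal n, -Q ^ n * (pochQDual Q p.1 * (pochQ Q p.2)⁻¹) := by
        rw [Nat.sum_antidiagonal_succ', Nat.sum_antidiagonal_succ]
        simp only [inv_pochQ_succ_mul hQ, pochQDual_succ_mul hQ, pow_zero, sub_self, mul_zero,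
          zero_mul, zero_add]
        congr 1
        refine sum_congr rfl fun p hp => ?_
        rw [← mem_antidiagonal.1 hp, pow_add]
        ring
      _ = (1 - Q ^ n) * P n := by
        rw [← mul_sum, hP]
        ring
  have hconst (n : ℕ) : (1 - Q ^ n) * P n = 0 := by
    induction n with
    | zero => simp
    | succ n ih => rw [step, ih]
  split_ifs with hn
  · simp [hn, pochQDual, pochQ_zero]
  · exact (mul_eq_zero.1 (hconst n)).resolve_left (one_sub_pow_ne_zero hQ hn)

theorem sum_Icc_pochQDual_mul_inv_pochQ {Q : F} (hQ : ¬IsOfFinOrder Q) {b m : ℕ} (hbm : b ≤ m) :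
    ∑ x ∈ Icc b m, pochQDual Q (m - x) * (pochQ Q (x - b))⁻¹ = if b = m then 1 else 0 := by
  have hreindex : ∑ x ∈ Icc b m, pochQDual Q (m - x) * (pochQ Q (x - b))⁻¹
      = ∑ p ∈ antidiagonal (m - b), pochQDual Q p.1 * (pochQ Q p.2)⁻¹ := by
    refine sum_nbij' (fun x => (m - x, x - b)) (fun p => p.2 + b) ?_ ?_ ?_ ?_ fun _ _ => rfl
    all_goals intro x hx
    all_goals simp only [mem_Icc, HasAntidiagonal.mem_antidiagonal, Prod.ext_iff] at hx ⊢
    all_goals omega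
  rw [hreindex, sum_antidiagonal_pochQDual_mul_inv_pochQ hQ]
  congr 1
  simp only [eq_iff_iff]
  omega

section Triangular

variable {α : Type*} [PartialOrder α] [LocallyFiniteOrderBot α]

theorem sum_Iic_mul_eq_of_sum_Icc_mul_eq_ite [LocallyFiniteOrder α] [DecidableEq α]
    {f g : α → α → F}
    (hgf : ∀ b m, b ≤ m → ∑ a ∈ Icc b m, g m a * f a b = if b = m then 1 else 0)
    {v J : α → F} (hJ : ∀ m, J m = ∑ a ∈ Iic m, f m a * v a) (m : α) :
    ∑ a ∈ Iic m, g m a * J a = v m := by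
  have hswap : ∀ a b, a ∈ Iic m ∧ b ∈ Iic a ↔ a ∈ Icc b m ∧ b ∈ Iic m := by
    intro a b
    simp only [mem_Iic, mem_Icc]
    exact ⟨fun h => ⟨⟨h.2, h.1⟩, h.2.trans h.1⟩, fun h => ⟨h.1.2, h.1.1⟩⟩
  calc ∑ a ∈ Iic m, g m a * J a
    _ = ∑ b ∈ Iic m, (∑ a ∈ Icc b m, g m a * f a b) * v b := by
      simp only [hJ, mul_sum, sum_mul, mul_assoc]
      exact sum_comm' hswap
    _ = v m := by
      rw [sum_congr rfl fun b hb => by rw [hgf b m (mem_Iic.1 hb)]]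
      simp

theorem eq_of_eq_sum_Iic [OrderBot α] [WellFoundedLT α] {c : α → α → F}
    (hc : ∀ m ≠ ⊥, c m m ≠ 1) {X Y : α → F} (h0 : X ⊥ = Y ⊥)
    (hX : ∀ m, X m = ∑ a ∈ Iic m, c m a * X a) (hY : ∀ m, Y m = ∑ a ∈ Iic m, c m a * Y a) :
    X = Y := by
  funext m
  induction m using WellFoundedLT.induction with
  | _ m ih =>
    rcases eq_or_ne m ⊥ with rfl | hm
    · exact h0
    have hdiag {Z : α → F} (hZ : ∀ m, Z m = ∑ a ∈ Iic m, c m a * Z a) :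
        (1 - c m m) * Z m = ∑ a ∈ Iio m, c m a * Z a := by
      rw [sub_mul, one_mul, sub_eq_iff_eq_add', ← sum_cons (f := fun a => c m a * Z a)
        (by simp), ← Iic_eq_cons_Iio, ← hZ]
    refine mul_left_cancel₀ (sub_ne_zero.2 (hc m hm).symm) ?_
    rw [hdiag hX, hdiag hY]
    exact sum_congr rfl fun a ha => by rw [ih a (mem_Iio.1 ha)]

end Triangular

variable {l : ℕ}

theorem sum_Icc_prod_pochQDual_mul_inv_prod_pochQ {Q : Fin l → F}
    (hQ : ∀ i, ¬IsOfFinOrder (Q i)) {b m : Fin l → ℕ} (hbm : b ≤ m) :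
    ∑ a ∈ Icc b m, (∏ i, pochQDual (Q i) (m i - a i)) * (∏ i, pochQ (Q i) (a i - b i))⁻¹
      = if b = m then 1 else 0 := by
  simp only [← prod_inv_distrib, ← prod_mul_distrib]
  rw [Pi.Icc_eq, ← prod_univ_sum (fun i => Icc (b i) (m i))
    (fun i x => pochQDual (Q i) (m i - x) * (pochQ (Q i) (x - b i))⁻¹)]
  simp [sum_Icc_pochQDual_mul_inv_pochQ (hQ _) (hbm _), prod_boole, funext_iff]

lemma prod_pow_sub_mul_prod_pow (Q : Fin l → F) {a m : Fin l → ℕ} (ham : a ≤ m) :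
    (∏ i, Q i ^ (m i - a i)) * ∏ i, Q i ^ a i = ∏ i, Q i ^ m i := by
  rw [← prod_mul_distrib]
  exact prod_congr rfl fun i _ => by rw [← pow_add, Nat.sub_add_cancel (ham i)]

lemma sum_Iic_comp_tsub {M : Type*} [AddCommMonoid M] (f : (Fin l → ℕ) → M) (m : Fin l → ℕ) :
    ∑ a ∈ Iic m, f (m - a) = ∑ a ∈ Iic m, f a :=
  sum_nbij' (m - ·) (m - ·) (fun _ _ => mem_Iic.2 tsub_le_self) (fun _ _ => mem_Iic.2 tsub_le_self)
    (fun _ ha => tsub_tsub_cancel_of_le (mem_Iic.1 ha))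
    (fun _ ha => tsub_tsub_cancel_of_le (mem_Iic.1 ha)) fun _ _ => rfl

lemma zpow_sum_natCast_mul (q : F) (d m : Fin l → ℕ) :
    q ^ (∑ i, (d i : ℤ) * m i) = ∏ i, (q ^ d i) ^ m i := by
  have hcast : ∑ i, (d i : ℤ) * m i = ((∑ i, d i * m i : ℕ) : ℤ) := by push_cast; rfl
  rw [hcast, zpow_natCast, ← prod_pow_eq_pow_sum]
  simp only [pow_mul]

section Fermionic

variable {G : Type*} [FunLike G F F] [RingHomClass G F F] {σ : G}

lemma map_pochQ (Q : F) (n : ℕ) : σ (pochQ Q n) = pochQ (σ Q) n := by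
  simp [pochQ, map_prod]

variable {B : Matrix (Fin l) (Fin l) ℤ} {d : Fin l → ℕ} {q : F} {z w : Fin l → F}
  {J Jz Jw : (Fin l → ℕ) → F}

lemma map_prod_pow_mul_zpow (hq : σ q = q⁻¹) (hz : ∀ i, σ (z i) = (z i)⁻¹)
    (a : Fin l → ℕ) (t : ℤ) : σ ((∏ i, z i ^ a i) * q ^ t) = ((∏ i, z i ^ a i) * q ^ t)⁻¹ := by
  rw [mul_inv, map_mul, map_zpow₀, hq, inv_zpow, map_prod, ← prod_inv_distrib]
  simp only [map_pow, hz, inv_pow]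

lemma inv_map_prod_pochQ (hq : σ q = q⁻¹) (hq0 : q ≠ 0) (n : Fin l → ℕ) :
    (σ (∏ i, pochQ (q ^ d i) (n i)))⁻¹
      = (∏ i, (q ^ d i) ^ n i) * ∏ i, pochQDual (q ^ d i) (n i) := by
  simp only [map_prod, map_pochQ, map_pow, hq, inv_pow, ← prod_inv_distrib,
    inv_pochQ_inv_base (pow_ne_zero _ hq0), prod_mul_distrib]

theorem _root_.IsFerm.sum_Iic_prod_pochQDual_mul (hQ : ∀ i, ¬IsOfFinOrder (q ^ d i))
    (hJ : IsFerm B d q z J) (m : Fin l → ℕ) :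
    ∑ a ∈ Iic m, (∏ i, pochQDual (q ^ d i) (m i - a i)) * J a
      = (∏ i, z i ^ m i) * q ^ W12 B d m * J m := by
  refine sum_Iic_mul_eq_of_sum_Icc_mul_eq_ite
    (f := fun m a => (∏ i, pochQ (q ^ d i) (m i - a i))⁻¹)
    (g := fun m a => ∏ i, pochQDual (q ^ d i) (m i - a i))
    (v := fun a => (∏ i, z i ^ a i) * q ^ W12 B d a * J a)
    (fun _ _ hbm => ?_) (fun m => ?_) m
  · exact sum_Icc_prod_pochQDual_mul_inv_prod_pochQ hQ hbm
  rw [hJ.2 m]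
  exact sum_congr rfl fun _ _ => by ring

theorem _root_.IsFerm.map_eq (hq : σ q = q⁻¹) (hz : ∀ i, σ (z i) = (z i)⁻¹) (hq0 : q ≠ 0)
    (hz0 : ∀ i, z i ≠ 0) (hQ : ∀ i, ¬IsOfFinOrder (q ^ d i))
    (hmono : ∀ m ≠ 0, (∏ i, z i ^ m i) * q ^ W12 B d m ≠ 1) (hJ : IsFerm B d q z J)
    (m : Fin l → ℕ) :
    σ (J m) = (∏ i, z i ^ m i) * q ^ W12 B d m * (∏ i, (q ^ d i) ^ m i) * J m := by
  have hz0' (a : Fin l → ℕ) : ∏ i, z i ^ a i ≠ 0 :=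
    prod_ne_zero_iff.2 fun i _ => pow_ne_zero _ (hz0 i)
  refine congrFun (eq_of_eq_sum_Iic (X := fun m => σ (J m))
    (Y := fun m => (∏ i, z i ^ m i) * q ^ W12 B d m * (∏ i, (q ^ d i) ^ m i) * J m)
    (c := fun m a => σ ((∏ i, z i ^ a i) * q ^ W12 B d a * (∏ i, pochQ (q ^ d i) (m i - a i))⁻¹))
    (fun m hm => ?_) ?_ (fun m => ?_) (fun m => ?_)) m
  · simp only [Nat.sub_self, pochQ_zero, prod_const_one, inv_one, mul_one,
      map_prod_pow_mul_zpow hq hz]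
    exact inv_ne_one.2 (hmono m hm)
  · simp [bot_eq_zero, hJ.1, W12]
  · rw [hJ.2 m, map_sum]
    simp only [map_mul]
  · have hterm : ∀ a ∈ Iic m,
        σ ((∏ i, z i ^ a i) * q ^ W12 B d a * (∏ i, pochQ (q ^ d i) (m i - a i))⁻¹)
          * ((∏ i, z i ^ a i) * q ^ W12 B d a * (∏ i, (q ^ d i) ^ a i) * J a)
        = (∏ i, (q ^ d i) ^ m i) * ((∏ i, pochQDual (q ^ d i) (m i - a i)) * J a) := by
      intro a ha
      rw [map_mul, map_inv₀, map_prod_pow_mul_zpow hq hz, inv_map_prod_pochQ hq hq0,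
        ← prod_pow_sub_mul_prod_pow _ (mem_Iic.1 ha)]
      field_simp [hz0' a]
    rw [sum_congr rfl hterm, ← mul_sum, hJ.sum_Iic_prod_pochQDual_mul hQ]
    ring

variable (B d q w) in
/-- `fermionicX B d q w (J z) (J w) m` is `X_m(z, w)`. -/
def fermionicX (J J' : (Fin l → ℕ) → F) (m : Fin l → ℕ) : F :=
  ∑ a ∈ Iic m, J (m - a) * J' a * q ^ W12 B d a * ∏ i, w i ^ a i

theorem map_fermionicX (hq : σ q = q⁻¹) (hz : ∀ i, σ (z i) = (z i)⁻¹)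
    (hw : ∀ i, σ (w i) = (w i)⁻¹) (hq0 : q ≠ 0) (hz0 : ∀ i, z i ≠ 0) (hw0 : ∀ i, w i ≠ 0)
    (hQ : ∀ i, ¬IsOfFinOrder (q ^ d i))
    (hzmono : ∀ m ≠ 0, (∏ i, z i ^ m i) * q ^ W12 B d m ≠ 1)
    (hwmono : ∀ m ≠ 0, (∏ i, w i ^ m i) * q ^ W12 B d m ≠ 1)
    (hJz : IsFerm B d q z Jz) (hJw : IsFerm B d q w Jw) (m : Fin l → ℕ) :
    σ (fermionicX B d q w Jz Jw m) = q ^ (∑ i, (d i : ℤ) * m i) * fermionicX B d q z Jw Jz m := by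
  rw [fermionicX, fermionicX, map_sum, zpow_sum_natCast_mul, mul_sum, ← sum_Iic_comp_tsub _ m]
  refine sum_congr rfl fun a ha => ?_
  have ham : a ≤ m := mem_Iic.1 ha
  rw [tsub_tsub_cancel_of_le ham, ← prod_pow_sub_mul_prod_pow _ ham]
  simp only [map_mul, map_zpow₀, map_prod, map_pow, hq, hw, inv_zpow, inv_pow, prod_inv_distrib,
    hJz.map_eq hq hz hq0 hz0 hQ hzmono, hJw.map_eq hq hw hq0 hw0 hQ hwmono, Pi.sub_apply]
  have hw0' : ∏ i, w i ^ (m i - a i) ≠ 0 := prod_ne_zero_iff.2 fun i _ => pow_ne_zero _ (hw0 i)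
  field_simp

end Fermionic

section FractionField

local notation "R" => MvPolynomial (Option (Fin l ⊕ Fin l)) ℚ

lemma algebraMap_X_ne_zero (v : Option (Fin l ⊕ Fin l)) :
    algebraMap R (F12 l) (MvPolynomial.X v) ≠ 0 :=
  (map_ne_zero_iff _ (IsFractionRing.injective _ _)).2 (MvPolynomial.X_ne_zero v)

lemma not_isOfFinOrder_q12 : ¬IsOfFinOrder (q12 l) := by
  rw [isOfFinOrder_iff_pow_eq_one]
  rintro ⟨n, hn, h⟩
  rw [q12, ← map_pow, ← map_one (algebraMap R (F12 l)),
    (IsFractionRing.injective _ _).eq_iff] at h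
  have h2 := congrArg (MvPolynomial.eval fun _ => (2 : ℚ)) h
  simp only [map_pow, MvPolynomial.eval_X, map_one] at h2
  exact absurd ((pow_eq_one_iff_of_nonneg (by norm_num) hn.ne').1 h2) (by norm_num)

lemma prod_pow_mul_q12_zpow_ne_one (x : Fin l → Fin l ⊕ Fin l) {m : Fin l → ℕ} (hm : m ≠ 0)
    (t : ℤ) :
    (∏ i, algebraMap R (F12 l) (MvPolynomial.X (some (x i))) ^ m i) * q12 l ^ t ≠ 1 := by
  set φ := MvPolynomial.eval fun v : Option (Fin l ⊕ Fin l) => v.elim (1 : ℚ) fun _ => 2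
  have hinj := IsFractionRing.injective R (F12 l)
  intro h
  simp only [← map_pow, ← map_prod, q12] at h
  have hP : ∏ i, (2 : ℚ) ^ m i = 1 := by
    obtain ⟨n, rfl | rfl⟩ := t.eq_nat_or_neg
    · rw [zpow_natCast, ← map_pow, ← map_mul, ← map_one (algebraMap R (F12 l)), hinj.eq_iff] at h
      simpa [φ] using congrArg φ h
    · rw [zpow_neg, zpow_natCast, mul_inv_eq_one₀ (pow_ne_zero _ (algebraMap_X_ne_zero none)),
        ← map_pow, hinj.eq_iff] at h
      simpa [φ] using congrArg φ h
  have hsum : ∑ i, m i ≠ 0 := by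
    simpa [sum_eq_zero_iff, funext_iff] using hm
  rw [prod_pow_eq_pow_sum, pow_eq_one_iff_of_nonneg (by norm_num) hsum] at hP
  norm_num at hP

end FractionField

end FermionicDuality

theorem stmt_12_general (l : ℕ) (B : Matrix (Fin l) (Fin l) ℤ) (d : Fin l → ℕ)
    (hdpos : ∀ i, 0 < d i)
    (Jz Jw : (Fin l → ℕ) → F12 l)
    (hJz : IsFerm B d (q12 l) (z12 l) Jz)
    (hJw : IsFerm B d (q12 l) (w12 l) Jw)
    (σ : F12 l ≃+* F12 l) (hq : σ (q12 l) = (q12 l)⁻¹)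
    (hz : ∀ i, σ (z12 l i) = (z12 l i)⁻¹)
    (hw : ∀ i, σ (w12 l i) = (w12 l i)⁻¹) :
    ∀ m : Fin l → ℕ,
      σ (∑ a ∈ Finset.Iic m,
          Jz (m - a) * Jw a * q12 l ^ (W12 B d a) * ∏ i, w12 l i ^ a i)
      = q12 l ^ (∑ i, (d i : ℤ) * m i) *
        ∑ a ∈ Finset.Iic m,
          Jw (m - a) * Jz a * q12 l ^ (W12 B d a) * ∏ i, z12 l i ^ a i :=
  FermionicDuality.map_fermionicX hq hz hw (FermionicDuality.algebraMap_X_ne_zero _)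
    (fun _ => FermionicDuality.algebraMap_X_ne_zero _)
    (fun _ => FermionicDuality.algebraMap_X_ne_zero _)
    (fun i h => FermionicDuality.not_isOfFinOrder_q12 (h.of_pow (hdpos i).ne'))
    (fun _ hm => FermionicDuality.prod_pow_mul_q12_zpow_ne_one Sum.inl hm _)
    (fun _ hm => FermionicDuality.prod_pow_mul_q12_zpow_ne_one Sum.inr hm _) hJz hJw

theorem stmt_12 (l : ℕ) (hl : 1 ≤ l) (B : Matrix (Fin l) (Fin l) ℤ) (d : Fin l → ℕ)
    (hsym : B.IsSymm) (hdpos : ∀ i, 0 < d i) (hdiag : ∀ i, B i i = 2 * d i)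
    (hoff : ∀ i j, i ≠ j → B i j ≤ 0) (hdvd : ∀ i j, (d i : ℤ) ∣ B i j)
    (hposdef : ∀ x : Fin l → ℤ, x ≠ 0 → 0 < ∑ i, ∑ j, B i j * x i * x j)
    (Jz Jw : (Fin l → ℕ) → F12 l)
    (hJz : IsFerm B d (q12 l) (z12 l) Jz)
    (hJw : IsFerm B d (q12 l) (w12 l) Jw)
    (σ : F12 l ≃+* F12 l) (hq : σ (q12 l) = (q12 l)⁻¹)
    (hz : ∀ i, σ (z12 l i) = (z12 l i)⁻¹)
    (hw : ∀ i, σ (w12 l i) = (w12 l i)⁻¹) :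
    ∀ m : Fin l → ℕ,
      σ (∑ a ∈ Finset.Iic m,
          Jz (m - a) * Jw a * q12 l ^ (W12 B d a) * ∏ i, w12 l i ^ a i)
      = q12 l ^ (∑ i, (d i : ℤ) * m i) *
        ∑ a ∈ Finset.Iic m,
          Jw (m - a) * Jz a * q12 l ^ (W12 B d a) * ∏ i, z12 l i ^ a i :=
  stmt_12_general l B d hdpos Jz Jw hJz hJw σ hq hz hw
end
end

section
/- In the field ℚ(q, z_1,…,z_l, u_1,…,u_l) the following recursion holds for every m ∈ ℕ^l: J_m(z) = ∑_{0 ≤ a ≤ m} X_a(z, u^{−1}·q^{−Ca+2}) · J_{m−a}(u·q^{Ca}), where u^{−1}·q^{−Ca+2} denotes substituting w_i = u_i^{−1} q^{−(Ca)_i + 2} into the second group of variables of X_a, u·q^{Ca} denotes substituting z_i = u_i q^{(Ca)_i} into J_{m−a}, and (Ca)_i = ∑_j C_{ij} a_j. (In the notation of the paper this is the identity J^λ_β = ∑_{α} X^{λ, α−μ−2ρ}_α J^{μ−α}_{β−α} for arbitrary weights λ, μ; it proves that the quasi-classical decomposition of the fermionic sum is exact.) -/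
/- STATEMENT 13: exactness of the quasi-classical decomposition: in
   ℚ(q,z_1,…,z_l,u_1,…,u_l),
     J_m(z) = ∑_{0≤a≤m} X_a(z, u⁻¹·q^{−Ca+2}) · J_{m−a}(u·q^{Ca}),
   where X_a(z,w) = ∑_{0≤b≤a} J_{a−b}(z) J_b(w) q^{W(b)} w^b, (J_m) is the
   unique family solving the fermionic recursion in the indicated variables,
   and C is a simply-laced Cartan matrix. -/

noncomputable section

open scoped BigOperators

/-- The field ℚ(q, z_1, …, z_l, u_1, …, u_l). -/
abbrev F13 (l : ℕ) : Type :=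
  FractionRing (MvPolynomial (Option (Fin l ⊕ Fin l)) ℚ)

/-- the variable q -/
def q13 (l : ℕ) : F13 l :=
  algebraMap (MvPolynomial (Option (Fin l ⊕ Fin l)) ℚ) (F13 l) (MvPolynomial.X none)

/-- the variables z_i -/
def z13 (l : ℕ) (i : Fin l) : F13 l :=
  algebraMap (MvPolynomial (Option (Fin l ⊕ Fin l)) ℚ) (F13 l)
    (MvPolynomial.X (some (Sum.inl i)))

/-- the variables u_i -/
def u13 (l : ℕ) (i : Fin l) : F13 l :=
  algebraMap (MvPolynomial (Option (Fin l ⊕ Fin l)) ℚ) (F13 l)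
    (MvPolynomial.X (some (Sum.inr i)))

/-- `W(a) = (1/2)∑ C_{ij} a_i a_j − ∑ a_i`  (the double sum is even, so integer
division by 2 gives the exact value). -/
def W13 {l : ℕ} (C : Matrix (Fin l) (Fin l) ℤ) (a : Fin l → ℕ) : ℤ :=
  (∑ i, ∑ j, C i j * a i * a j) / 2 - ∑ i, (a i : ℤ)

/-- `(Ca)_i = ∑_j C_{ij} a_j` -/
def Cv {l : ℕ} (C : Matrix (Fin l) (Fin l) ℤ) (a : Fin l → ℕ) (i : Fin l) : ℤ :=
  ∑ j, C i j * a j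

/-- `(q)_n = ∏_{k=1}^n (1 − q^k)` -/
def qP {F : Type} [Field F] (q : F) (n : ℕ) : F :=
  ∏ k ∈ Finset.range n, (1 - q ^ (k + 1))

/-- `J` is the family satisfying `J 0 = 1` and the fermionic recursion with
variables `q`, `z` (simply-laced case). -/
def IsFermC {l : ℕ} (C : Matrix (Fin l) (Fin l) ℤ)
    {F : Type} [Field F] (q : F) (z : Fin l → F) (J : (Fin l → ℕ) → F) : Prop :=
  J 0 = 1 ∧ ∀ m : Fin l → ℕ, J m = ∑ a ∈ Finset.Iic m,
    (∏ i, z i ^ a i) * q ^ (W13 C a) *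
      (∏ i, qP q (m i - a i))⁻¹ * J a

/-! The identity says that two triangular kernels indexed by `Iic m` are mutually inverse:
`(a, c) ↦ J_{a-c}(w_a) q^{W(a-c)} w_a^{a-c}` with `w_a = u⁻¹ q^{-Ca+2}`, and
`(c, a) ↦ J_{a-c}(u q^{Cc})`. Being square matrices, it suffices to check the product in the
other order, whose entries are `X_{m-c}(u q^{Cc}, w_m)`.

Expanding both `J`s by the fermionic recursion exhibits `X_n(ζ, ω)` as a sum symmetric in
`(ζ, J(ζ))` and `(ω, J(ω))`, so `X_n(ζ, ω) = X_n(ω, ζ)`. If `ζ_i ω_i = q^{2-(Cn)_i}`, reflecting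
`b ↦ n - b` and using `W(n-b) = W(n) + W(b) + ∑_i (2 - (Cn)_i) b_i` gives
`X_n(ζ, ω) ζ^n q^{W(n)} = X_n(ω, ζ)`. Hence `X_n(ζ, ω) = 0` unless `ζ^n q^{W(n)} = 1`, and for
`ζ = u q^{Cc}` this monomial is `u^n q^t ≠ 1` whenever `n ≠ 0`. -/

open Finset

section Triangular

variable {K α : Type*} [CommRing K] [PartialOrder α] [LocallyFiniteOrder α]

def Finset.upperTriangular [DecidableLE α] (s : Finset α) (f : α → α → K) : Matrix s s K :=
  Matrix.of fun i j => if (i : α) ≤ j then f i j else 0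

lemma upperTriangular_Icc_mul_apply [DecidableLE α] {a b : α} (f g : α → α → K)
    (i j : Icc a b) :
    ((Icc a b).upperTriangular f * (Icc a b).upperTriangular g) i j =
      if (i : α) ≤ j then ∑ x ∈ Icc (i : α) j, f i x * g x j else 0 := by
  rw [Matrix.mul_apply]
  split_ifs with hij
  · have hsub : Icc (i : α) j = (Icc a b).filter fun x => (i : α) ≤ x ∧ x ≤ j := by
      ext x
      simp only [mem_Icc, mem_filter]
      have := mem_Icc.1 i.2
      have := mem_Icc.1 j.2
      exact ⟨fun h => ⟨⟨by order, by order⟩, h⟩, And.right⟩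
    rw [hsub, sum_filter, ← sum_attach (Icc a b), univ_eq_attach]
    refine sum_congr rfl fun x _ => ?_
    simp only [Finset.upperTriangular, Matrix.of_apply]
    split_ifs <;> simp_all
  · refine sum_eq_zero fun x _ => ?_
    simp only [Finset.upperTriangular, Matrix.of_apply]
    split_ifs with h₁ h₂ <;> first | simp | exact absurd (h₁.trans h₂) hij

theorem sum_Icc_mul_eq_ite_comm [DecidableEq α] {f g : α → α → K}
    (h : ∀ a b, a ≤ b → ∑ x ∈ Icc a b, f a x * g x b = if a = b then 1 else 0)
    {a b : α} (hab : a ≤ b) :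
    ∑ x ∈ Icc a b, g a x * f x b = if a = b then 1 else 0 := by
  classical
  have hfg : (Icc a b).upperTriangular f * (Icc a b).upperTriangular g = 1 := by
    ext i j
    rw [upperTriangular_Icc_mul_apply, Matrix.one_apply]
    split_ifs with hij hij' hij'
    · rw [h _ _ hij, if_pos (congrArg Subtype.val hij')]
    · rw [h _ _ hij, if_neg (Subtype.coe_ne_coe.2 hij')]
    · exact absurd (hij' ▸ le_rfl) hij
    · rfl
  have hgf : (Icc a b).upperTriangular g * (Icc a b).upperTriangular f = 1 :=
    mul_eq_one_comm.1 hfg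
  have hab' := congr_fun₂ hgf ⟨a, left_mem_Icc.2 hab⟩ ⟨b, right_mem_Icc.2 hab⟩
  rw [upperTriangular_Icc_mul_apply, if_pos hab, Matrix.one_apply] at hab'
  simpa only [Subtype.mk.injEq] using hab'

end Triangular

section Reflection

variable {α M : Type*} [AddCommMonoid α] [PartialOrder α] [CanonicallyOrderedAdd α] [Sub α]
  [OrderedSub α] [AddLeftReflectLE α]

lemma le_and_le_tsub_iff_add_le {b p n : α} : b ≤ n ∧ p ≤ n - b ↔ b + p ≤ n :=
  ⟨fun h => (le_tsub_iff_left h.1).1 h.2,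
    fun h => ⟨le_of_add_le_left h, le_tsub_of_add_le_left h⟩⟩

variable [LocallyFiniteOrderBot α] [AddCommMonoid M]

lemma sum_Icc_eq_sum_Iic_tsub [LocallyFiniteOrder α] {c n : α} (hcn : c ≤ n) (f : α → M) :
    ∑ a ∈ Icc c n, f a = ∑ b ∈ Iic (n - c), f (n - b) := by
  refine sum_nbij' (n - ·) (n - ·) (fun a ha => ?_) (fun b hb => ?_) (fun a ha => ?_)
    (fun b hb => ?_) (fun a ha => ?_)
  all_goals simp only [mem_Icc, mem_Iic] at *
  · exact tsub_le_tsub_left ha.1 n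
  · exact ⟨le_tsub_of_add_le_right ((le_tsub_iff_left hcn).1 hb), tsub_le_self⟩
  · exact tsub_tsub_cancel_of_le ha.2
  · exact tsub_tsub_cancel_of_le (hb.trans tsub_le_self)
  · rw [tsub_tsub_cancel_of_le ha.2]

lemma sum_Iic_eq_sum_Iic_tsub (n : α) (f : α → M) :
    ∑ a ∈ Iic n, f a = ∑ b ∈ Iic n, f (n - b) := by
  refine sum_nbij' (n - ·) (n - ·) (fun a _ => ?_) (fun b _ => ?_) (fun a ha => ?_)
    (fun b hb => ?_) (fun a ha => ?_)
  all_goals simp only [mem_Iic] at *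
  · exact tsub_le_self
  · exact tsub_le_self
  · exact tsub_tsub_cancel_of_le ha
  · exact tsub_tsub_cancel_of_le hb
  · rw [tsub_tsub_cancel_of_le ha]

end Reflection

lemma prod_zpow_pow_eq_zpow_sum {ι G₀ : Type*} [CommGroupWithZero G₀] {a : G₀} (ha : a ≠ 0)
    (s : Finset ι) (k : ι → ℤ) (b : ι → ℕ) :
    ∏ i ∈ s, (a ^ k i) ^ b i = a ^ ∑ i ∈ s, k i * b i := by
  classical
  induction s using Finset.induction_on with
  | empty => simp
  | insert i s hi ih =>
    rw [prod_insert hi, sum_insert hi, zpow_add₀ ha, ih, zpow_mul, zpow_natCast]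

section QuadraticForm

variable {l : ℕ} {C : Matrix (Fin l) (Fin l) ℤ}

open Matrix

lemma sum_sum_mul_mul_eq_dotProduct_mulVec (x : Fin l → ℤ) :
    ∑ i, ∑ j, C i j * x i * x j = x ⬝ᵥ C *ᵥ x := by
  simp only [dotProduct, mulVec, mul_sum]
  exact sum_congr rfl fun i _ => sum_congr rfl fun j _ => by ring

lemma two_dvd_sum_sum_mul_mul (hsym : C.IsSymm) (hdiag : ∀ i, Even (C i i)) (x : Fin l → ℤ) :
    2 ∣ ∑ i, ∑ j, C i j * x i * x j := by
  refine (ZMod.intCast_zmod_eq_zero_iff_dvd _ 2).1 ?_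
  rw [← sum_product']
  push_cast
  refine sum_involution (fun p _ => p.swap) (fun p _ => ?_) (fun p _ hp hswap => hp ?_)
    (fun p _ => mem_univ _) (fun p _ => Prod.swap_swap p)
  · rw [Prod.fst_swap, Prod.snd_swap, ← hsym.apply p.1 p.2]
    ring_nf
    exact mul_eq_zero_of_right _ rfl
  · obtain ⟨i, j⟩ := p
    obtain rfl : j = i := congrArg Prod.fst hswap
    rw [ZMod.intCast_eq_zero_iff_even.2 (hdiag j), zero_mul, zero_mul]

lemma natCast_tsub_of_le {n b : Fin l → ℕ} (h : b ≤ n) :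
    (fun i => ((n - b) i : ℤ)) = (fun i => (n i : ℤ)) - fun i => (b i : ℤ) :=
  funext fun i => Nat.cast_sub (h i)

lemma Cv_tsub {c n : Fin l → ℕ} (h : c ≤ n) (i : Fin l) :
    Cv C (n - c) i = Cv C n i - Cv C c i := by
  change (C *ᵥ _) i = (C *ᵥ _) i - (C *ᵥ _) i
  rw [natCast_tsub_of_le h, mulVec_sub, Pi.sub_apply]

lemma dotProduct_mulVec_sub_self (hsym : C.IsSymm) (x y : Fin l → ℤ) :
    (x - y) ⬝ᵥ C *ᵥ (x - y) = x ⬝ᵥ C *ᵥ x + y ⬝ᵥ C *ᵥ y - 2 * (y ⬝ᵥ C *ᵥ x) := by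
  have hswap : x ⬝ᵥ C *ᵥ y = y ⬝ᵥ C *ᵥ x := by
    rw [dotProduct_mulVec, ← mulVec_transpose, hsym.eq, dotProduct_comm]
  rw [mulVec_sub, dotProduct_sub, sub_dotProduct, sub_dotProduct, hswap]
  ring

lemma W13_tsub (hsym : C.IsSymm) (hdiag : ∀ i, Even (C i i)) {b n : Fin l → ℕ} (h : b ≤ n) :
    W13 C (n - b) = W13 C n + W13 C b + ∑ i, (2 - Cv C n i) * b i := by
  have hlin : ∑ i, (2 - Cv C n i) * b i
      = 2 * ∑ i, (b i : ℤ) - (fun i => (b i : ℤ)) ⬝ᵥ C *ᵥ fun i => (n i : ℤ) := by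
    rw [mul_sum, dotProduct, ← sum_sub_distrib]
    exact sum_congr rfl fun i _ => by simp only [Cv, dotProduct, mulVec]; ring
  have hsum : ∑ i, ((n - b) i : ℤ) = ∑ i, (n i : ℤ) - ∑ i, (b i : ℤ) := by
    rw [← sum_sub_distrib]
    exact sum_congr rfl fun i _ => Nat.cast_sub (h i)
  -- evenness makes the integer division in `W13` exact
  obtain ⟨kn, hkn⟩ := two_dvd_sum_sum_mul_mul hsym hdiag fun i => (n i : ℤ)
  obtain ⟨kb, hkb⟩ := two_dvd_sum_sum_mul_mul hsym hdiag fun i => (b i : ℤ)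
  rw [sum_sum_mul_mul_eq_dotProduct_mulVec] at hkn hkb
  simp only [W13, hsum, hlin, sum_sum_mul_mul_eq_dotProduct_mulVec]
  rw [natCast_tsub_of_le h, dotProduct_mulVec_sub_self hsym, hkn, hkb]
  omega

end QuadraticForm

section FermionicPairing

variable {l : ℕ} (C : Matrix (Fin l) (Fin l) ℤ) {F : Type} [Field F] (q : F)

def fermWeight (J : (Fin l → ℕ) → F) (ω : Fin l → F) (b : Fin l → ℕ) : F :=
  J b * q ^ W13 C b * ∏ i, ω i ^ b i

/-- The paper's `X_n(ζ, ω) = ∑_b J_{n-b}(ζ) J_b(ω) q^{W(b)} ω^b`, with the families `J(ζ)` and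
`J(ω)` passed as `J₁` and `J₂`. -/
def fermX (J₁ J₂ : (Fin l → ℕ) → F) (ω : Fin l → F) (n : Fin l → ℕ) : F :=
  ∑ b ∈ Iic n, J₁ (n - b) * fermWeight C q J₂ ω b

variable {C q}

lemma fermX_eq_sum_mul_fermWeight_tsub (J₁ J₂ : (Fin l → ℕ) → F) (ω : Fin l → F)
    (n : Fin l → ℕ) :
    fermX C q J₁ J₂ ω n = ∑ c ∈ Iic n, J₁ c * fermWeight C q J₂ ω (n - c) := by
  rw [fermX, sum_Iic_eq_sum_Iic_tsub n]
  exact sum_congr rfl fun c hc => by rw [tsub_tsub_cancel_of_le (mem_Iic.1 hc)]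

lemma fermX_zero (J₁ J₂ : (Fin l → ℕ) → F) (ω : Fin l → F) :
    fermX C q J₁ J₂ ω 0 = J₁ 0 * J₂ 0 := by
  rw [fermX, show Iic (0 : Fin l → ℕ) = {0} from Iic_bot, sum_singleton]
  simp [fermWeight, W13]

lemma fermX_eq_sum_sum {κ ρ : Fin l → F} {K L : (Fin l → ℕ) → F} (hK : IsFermC C q κ K)
    (n : Fin l → ℕ) :
    fermX C q K L ρ n = ∑ b ∈ Iic n, ∑ p ∈ Iic (n - b),
      fermWeight C q L ρ b * fermWeight C q K κ p * (∏ i, qP q ((n - b - p) i))⁻¹ := by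
  refine sum_congr rfl fun b _ => ?_
  rw [hK.2 (n - b), sum_mul]
  exact sum_congr rfl fun p _ => by simp only [fermWeight, Pi.sub_apply]; ring

lemma fermX_comm {ζ ω : Fin l → F} {J₁ J₂ : (Fin l → ℕ) → F}
    (h₁ : IsFermC C q ζ J₁) (h₂ : IsFermC C q ω J₂) (n : Fin l → ℕ) :
    fermX C q J₁ J₂ ω n = fermX C q J₂ J₁ ζ n := by
  rw [fermX_eq_sum_sum h₁, fermX_eq_sum_sum h₂]
  refine (sum_comm' fun b p => ?_).trans
    (sum_congr rfl fun p _ => sum_congr rfl fun b _ => ?_)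
  · rw [mem_Iic, mem_Iic, mem_Iic, mem_Iic, le_and_le_tsub_iff_add_le, and_comm,
      le_and_le_tsub_iff_add_le, add_comm]
  · rw [tsub_right_comm]
    ring

lemma fermX_mul_eq (hq : q ≠ 0) (hsym : C.IsSymm) (hdiag : ∀ i, Even (C i i))
    {ζ ω : Fin l → F} {n : Fin l → ℕ} (hrel : ∀ i, ζ i * ω i = q ^ (2 - Cv C n i))
    (J₁ J₂ : (Fin l → ℕ) → F) :
    fermX C q J₁ J₂ ω n * ((∏ i, ζ i ^ n i) * q ^ W13 C n) = fermX C q J₂ J₁ ζ n := by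
  rw [fermX, sum_mul, fermX_eq_sum_mul_fermWeight_tsub]
  refine sum_congr rfl fun b hb => ?_
  replace hb : b ≤ n := mem_Iic.1 hb
  have hζ : ∏ i, ζ i ^ n i = (∏ i, ζ i ^ (n - b) i) * ∏ i, ζ i ^ b i := by
    rw [← prod_mul_distrib]
    exact prod_congr rfl fun i _ => by rw [← pow_add, Pi.sub_apply, Nat.sub_add_cancel (hb i)]
  have hωζ : (∏ i, ω i ^ b i) * ∏ i, ζ i ^ b i = q ^ ∑ i, (2 - Cv C n i) * b i := by
    rw [← prod_mul_distrib, ← prod_zpow_pow_eq_zpow_sum hq]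
    exact prod_congr rfl fun i _ => by rw [← mul_pow, mul_comm, hrel]
  rw [fermWeight, fermWeight, W13_tsub hsym hdiag hb, zpow_add₀ hq, zpow_add₀ hq, hζ, ← hωζ]
  ring

lemma fermX_eq_zero (hq : q ≠ 0) (hsym : C.IsSymm) (hdiag : ∀ i, Even (C i i))
    {ζ ω : Fin l → F} {n : Fin l → ℕ} (hrel : ∀ i, ζ i * ω i = q ^ (2 - Cv C n i))
    (hne : (∏ i, ζ i ^ n i) * q ^ W13 C n ≠ 1) {J₁ J₂ : (Fin l → ℕ) → F}
    (h₁ : IsFermC C q ζ J₁) (h₂ : IsFermC C q ω J₂) :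
    fermX C q J₁ J₂ ω n = 0 := by
  have h := fermX_mul_eq hq hsym hdiag hrel J₁ J₂
  rw [← fermX_comm h₁ h₂] at h
  by_contra hX
  exact hne (mul_left_cancel₀ hX (h.trans (mul_one _).symm))

end FermionicPairing

section Monomials

variable {l : ℕ}

lemma q13_ne_zero : q13 l ≠ 0 :=
  (map_ne_zero_iff _ (IsFractionRing.injective _ _)).2 (MvPolynomial.X_ne_zero _)

lemma u13_ne_zero (i : Fin l) : u13 l i ≠ 0 :=
  (map_ne_zero_iff _ (IsFractionRing.injective _ _)).2 (MvPolynomial.X_ne_zero _)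

lemma prod_u13_pow_mul_q13_zpow_ne_one {n : Fin l → ℕ} (hn : n ≠ 0) (t : ℤ) :
    (∏ i, u13 l i ^ n i) * q13 l ^ t ≠ 1 := by
  obtain ⟨i₀, hi₀⟩ : ∃ i, n i ≠ 0 := Function.ne_iff.1 hn
  obtain ⟨a, b, rfl⟩ : ∃ a b : ℕ, t = a - b := ⟨t.toNat, (-t).toNat, by omega⟩
  intro h
  rw [zpow_sub₀ q13_ne_zero, zpow_natCast, zpow_natCast, mul_div_assoc',
    div_eq_one_iff_eq (pow_ne_zero _ q13_ne_zero)] at h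
  set R := MvPolynomial (Option (Fin l ⊕ Fin l)) ℚ
  have hpoly : (∏ i, (MvPolynomial.X (some (.inr i)) : R) ^ n i) * MvPolynomial.X none ^ a =
      MvPolynomial.X none ^ b := by
    apply IsFractionRing.injective R (F13 l)
    simpa [map_prod, u13, q13] using h
  have := congrArg (MvPolynomial.eval fun v => if v = some (Sum.inr i₀) then (0 : ℚ) else 1) hpoly
  simp [prod_eq_zero (mem_univ i₀), hi₀] at this

end Monomials

section Orthogonality

variable {l : ℕ} {C : Matrix (Fin l) (Fin l) ℤ} {JA JU : (Fin l → ℕ) → (Fin l → ℕ) → F13 l}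

lemma fermX_u13_eq_ite (hsym : C.IsSymm) (hdiag : ∀ i, Even (C i i))
    (hJA : ∀ a, IsFermC C (q13 l) (fun i => (u13 l i)⁻¹ * q13 l ^ (-(Cv C a i) + 2)) (JA a))
    (hJU : ∀ a, IsFermC C (q13 l) (fun i => u13 l i * q13 l ^ (Cv C a i)) (JU a))
    {c m : Fin l → ℕ} (hcm : c ≤ m) :
    fermX C (q13 l) (JU c) (JA m) (fun i => (u13 l i)⁻¹ * q13 l ^ (-(Cv C m i) + 2)) (m - c) =
      if c = m then 1 else 0 := by
  split_ifs with hcm'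
  · subst hcm'
    rw [tsub_self, fermX_zero, (hJU c).1, (hJA c).1, one_mul]
  refine fermX_eq_zero q13_ne_zero hsym hdiag (fun i => ?_) ?_ (hJU c) (hJA m)
  · rw [mul_mul_mul_comm, mul_inv_cancel₀ (u13_ne_zero i), one_mul, ← zpow_add₀ q13_ne_zero,
      Cv_tsub hcm]
    congr 1
    ring
  · have hn : m - c ≠ 0 := fun h => hcm' (le_antisymm hcm (tsub_eq_zero_iff_le.1 h))
    simp only [mul_pow, prod_mul_distrib]
    rw [prod_zpow_pow_eq_zpow_sum q13_ne_zero, mul_assoc, ← zpow_add₀ q13_ne_zero]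
    exact prod_u13_pow_mul_q13_zpow_ne_one hn _

lemma sum_Icc_fermWeight_mul_eq_ite (hsym : C.IsSymm) (hdiag : ∀ i, Even (C i i))
    (hJA : ∀ a, IsFermC C (q13 l) (fun i => (u13 l i)⁻¹ * q13 l ^ (-(Cv C a i) + 2)) (JA a))
    (hJU : ∀ a, IsFermC C (q13 l) (fun i => u13 l i * q13 l ^ (Cv C a i)) (JU a))
    {c m : Fin l → ℕ} (hcm : c ≤ m) :
    ∑ a ∈ Icc c m, fermWeight C (q13 l) (JA a)
        (fun i => (u13 l i)⁻¹ * q13 l ^ (-(Cv C a i) + 2)) (a - c) * JU a (m - a) =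
      if c = m then 1 else 0 := by
  refine sum_Icc_mul_eq_ite_comm (f := fun a x => JU a (x - a))
    (g := fun x b => fermWeight C (q13 l) (JA b)
      (fun i => (u13 l i)⁻¹ * q13 l ^ (-(Cv C b i) + 2)) (b - x)) (fun a b hab => ?_) hcm
  rw [sum_Icc_eq_sum_Iic_tsub hab, ← fermX_u13_eq_ite hsym hdiag hJA hJU hab, fermX]
  refine sum_congr rfl fun x hx => ?_
  rw [tsub_right_comm, tsub_tsub_cancel_of_le ((mem_Iic.1 hx).trans tsub_le_self)]

end Orthogonality

theorem stmt_13_general (l : ℕ) (C : Matrix (Fin l) (Fin l) ℤ)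
    (hsym : C.IsSymm) (hdiag : ∀ i, C i i = 2)
    -- J in the variables z
    (Jz : (Fin l → ℕ) → F13 l)
    -- for each a, J in the substituted variables u_i⁻¹ q^{−(Ca)_i+2}
    (JA : (Fin l → ℕ) → (Fin l → ℕ) → F13 l)
    (hJA : ∀ a, IsFermC C (q13 l)
      (fun i => (u13 l i)⁻¹ * q13 l ^ (-(Cv C a i) + 2)) (JA a))
    -- for each a, J in the substituted variables u_i q^{(Ca)_i}
    (JU : (Fin l → ℕ) → (Fin l → ℕ) → F13 l)
    (hJU : ∀ a, IsFermC C (q13 l)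
      (fun i => u13 l i * q13 l ^ (Cv C a i)) (JU a)) :
    ∀ m : Fin l → ℕ,
      Jz m = ∑ a ∈ Finset.Iic m,
        (∑ b ∈ Finset.Iic a,
          Jz (a - b) * JA a b * q13 l ^ (W13 C b) *
            ∏ i, ((u13 l i)⁻¹ * q13 l ^ (-(Cv C a i) + 2)) ^ b i) *
        JU a (m - a) := by
  intro m
  have hdiag' : ∀ i, Even (C i i) := fun i => hdiag i ▸ even_two
  set w : (Fin l → ℕ) → Fin l → F13 l := fun a i => (u13 l i)⁻¹ * q13 l ^ (-(Cv C a i) + 2)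
  calc Jz m
      = ∑ c ∈ Iic m, Jz c * ∑ a ∈ Icc c m, fermWeight C (q13 l) (JA a) (w a) (a - c) *
          JU a (m - a) := by
        rw [sum_congr rfl fun c hc =>
          by rw [sum_Icc_fermWeight_mul_eq_ite hsym hdiag' hJA hJU (mem_Iic.1 hc)]]
        simp
    _ = ∑ a ∈ Iic m, fermX C (q13 l) Jz (JA a) (w a) a * JU a (m - a) := by
        simp only [fermX_eq_sum_mul_fermWeight_tsub, mul_sum, sum_mul, mul_assoc]
        refine sum_comm' fun c a => ?_
        simp only [mem_Iic, mem_Icc]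
        exact ⟨fun h => h.2, fun h => ⟨h.1.trans h.2, h⟩⟩
    _ = _ := by simp only [fermX, fermWeight, mul_assoc, w]

theorem stmt_13 (l : ℕ) (hl : 1 ≤ l) (C : Matrix (Fin l) (Fin l) ℤ)
    (hsym : C.IsSymm) (hdiag : ∀ i, C i i = 2)
    (hoff : ∀ i j, i ≠ j → C i j = 0 ∨ C i j = -1)
    (hposdef : ∀ x : Fin l → ℤ, x ≠ 0 → 0 < ∑ i, ∑ j, C i j * x i * x j)
    -- J in the variables z
    (Jz : (Fin l → ℕ) → F13 l) (hJz : IsFermC C (q13 l) (z13 l) Jz)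
    -- for each a, J in the substituted variables u_i⁻¹ q^{−(Ca)_i+2}
    (JA : (Fin l → ℕ) → (Fin l → ℕ) → F13 l)
    (hJA : ∀ a, IsFermC C (q13 l)
      (fun i => (u13 l i)⁻¹ * q13 l ^ (-(Cv C a i) + 2)) (JA a))
    -- for each a, J in the substituted variables u_i q^{(Ca)_i}
    (JU : (Fin l → ℕ) → (Fin l → ℕ) → F13 l)
    (hJU : ∀ a, IsFermC C (q13 l)
      (fun i => u13 l i * q13 l ^ (Cv C a i)) (JU a)) :
    ∀ m : Fin l → ℕ,
      Jz m = ∑ a ∈ Finset.Iic m,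
        (∑ b ∈ Finset.Iic a,
          Jz (a - b) * JA a b * q13 l ^ (W13 C b) *
            ∏ i, ((u13 l i)⁻¹ * q13 l ^ (-(Cv C a i) + 2)) ^ b i) *
        JU a (m - a) :=
  stmt_13_general l C hsym hdiag Jz JA hJA JU hJU

end
end
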